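/- arXiv:1508.05079 — 6 statements merged into one kernel-verified Lean document; each statement's English description precedes it below -/
import Mathlib

section
/- Let ε ∈ {1, −1}, let ν, β be nonnegative integers, let α be a positive integer, and let x ∈ ℤ. For m ∈ ℕ and N ∈ ℕ define the partial sum S_m(N) = ∑_{n=0}^{N−1} ε^n (n+ν)! (n+ν)^m x^{αn+β} (an integer). Then for every k ∈ ℕ and every N ∈ ℕ the identity S_k(N) = ν!·ν^k·x^β + ε·x^α·S_0(N) + ε·x^α·∑_{ℓ=1}^{k+1} binom(k+1, ℓ)·S_ℓ(N) − ε^N·(N+ν)!·(N+ν)^k·x^{αN+β} holds in ℤ. -/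
/-!
Write `t_m(n) = ε^n (n+ν)! (n+ν)^m x^(αn+β)`, so that `S_m(N) = ∑_{n<N} t_m(n)`. Since
`(n+ν+1)! = (n+ν+1)·(n+ν)!`, the shifted term is
`t_k(n+1) = ε x^α · ε^n (n+ν)! (n+ν+1)^(k+1) x^(αn+β)`, and expanding `(n+ν+1)^(k+1)` by the
binomial theorem gives `t_k(n+1) = ε x^α ∑_{ℓ ≤ k+1} binom(k+1, ℓ) t_ℓ(n)`. Summing over `n < N`
and comparing with the telescoping identity `∑_{n<N} t(n) = t(0) + ∑_{n<N} t(n+1) - t(N)` yields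
the claim.
-/

open Finset

namespace FactorialPowerSum

variable {R : Type*} [CommRing R]

theorem sum_range_eq_add_sum_range_succ_sub (f : ℕ → R) (N : ℕ) :
    ∑ n ∈ range N, f n = f 0 + ∑ n ∈ range N, f (n + 1) - f N := by
  have h := sum_range_succ' f N
  rw [sum_range_succ] at h
  linear_combination h

theorem sum_range_succ_eq_add_sum_Icc (g : ℕ → R) (n : ℕ) :
    ∑ ℓ ∈ range (n + 1), g ℓ = g 0 + ∑ ℓ ∈ Icc 1 n, g ℓ := by
  rw [sum_range_eq_add_Ico g (by omega), ← Ico_add_one_right_eq_Icc]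

def term (ε x : R) (ν α β m n : ℕ) : R :=
  ε ^ n * ((n + ν).factorial : R) * ((n : R) + ν) ^ m * x ^ (α * n + β)

variable (ε x : R) (ν α β : ℕ)

theorem term_zero (k : ℕ) : term ε x ν α β k 0 = (ν.factorial : R) * (ν : R) ^ k * x ^ β := by
  simp only [term, pow_zero, one_mul, zero_add, Nat.cast_zero, mul_zero]

theorem term_succ (k n : ℕ) :
    term ε x ν α β k (n + 1) =
      ε * x ^ α * ∑ ℓ ∈ range (k + 2), ((k + 1).choose ℓ : R) * term ε x ν α β ℓ n := by
  have hfactorial : ((n + 1 + ν).factorial : R) = ((n : R) + ν + 1) * (n + ν).factorial := by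
    rw [add_right_comm, Nat.factorial_succ]
    push_cast
    ring
  have hbinomial : ((n : R) + ν + 1) ^ (k + 1) =
      ∑ ℓ ∈ range (k + 2), ((k + 1).choose ℓ : R) * ((n : R) + ν) ^ ℓ := by
    rw [add_pow]
    exact sum_congr rfl fun ℓ _ => by rw [one_pow, mul_one, mul_comm]
  calc term ε x ν α β k (n + 1)
      = ε * x ^ α * (ε ^ n * (n + ν).factorial * x ^ (α * n + β)) *
          ((n : R) + ν + 1) ^ (k + 1) := by
        simp only [term, hfactorial]
        push_cast
        ring
    _ = _ := by
        rw [hbinomial, mul_sum, mul_sum]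
        exact sum_congr rfl fun ℓ _ => by simp only [term]; ring

theorem sum_term_succ (k N : ℕ) :
    ∑ n ∈ range N, term ε x ν α β k (n + 1) =
      ε * x ^ α * ∑ ℓ ∈ range (k + 2),
        ((k + 1).choose ℓ : R) * ∑ n ∈ range N, term ε x ν α β ℓ n := by
  simp only [term_succ, ← mul_sum]
  rw [sum_comm]
  exact congrArg _ (sum_congr rfl fun ℓ _ => (mul_sum ..).symm)

end FactorialPowerSum

open FactorialPowerSum in
theorem stmt_4_general (ε : ℤ) (ν β : ℕ) (α : ℕ)
    (x : ℤ) (S : ℕ → ℕ → ℤ)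
    (hS : ∀ m N : ℕ, S m N =
      ∑ n ∈ Finset.range N,
        ε ^ n * ((n + ν).factorial : ℤ) * ((n : ℤ) + ν) ^ m * x ^ (α * n + β))
    (k N : ℕ) :
    S k N =
      (ν.factorial : ℤ) * (ν : ℤ) ^ k * x ^ β + ε * x ^ α * S 0 N +
        ε * x ^ α * ∑ ℓ ∈ Finset.Icc 1 (k + 1), ((k + 1).choose ℓ : ℤ) * S ℓ N -
        ε ^ N * ((N + ν).factorial : ℤ) * ((N : ℤ) + ν) ^ k * x ^ (α * N + β) := by
  have hS' : ∀ m N, S m N = ∑ n ∈ range N, term ε x ν α β m n := hS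
  rw [hS' k, sum_range_eq_add_sum_range_succ_sub, sum_term_succ, sum_range_succ_eq_add_sum_Icc,
    term_zero]
  simp only [← hS', Nat.choose_zero_right, Nat.cast_one, one_mul, mul_add, ← add_assoc]
  rfl

theorem stmt_4 (ε : ℤ) (hε : ε = 1 ∨ ε = -1) (ν β : ℕ) (α : ℕ) (hα : 0 < α)
    (x : ℤ) (S : ℕ → ℕ → ℤ)
    (hS : ∀ m N : ℕ, S m N =
      ∑ n ∈ Finset.range N,
        ε ^ n * ((n + ν).factorial : ℤ) * ((n : ℤ) + ν) ^ m * x ^ (α * n + β))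
    (k N : ℕ) :
    S k N =
      (ν.factorial : ℤ) * (ν : ℤ) ^ k * x ^ β + ε * x ^ α * S 0 N +
        ε * x ^ α * ∑ ℓ ∈ Finset.Icc 1 (k + 1), ((k + 1).choose ℓ : ℤ) * S ℓ N -
        ε ^ N * ((N + ν).factorial : ℤ) * ((N : ℤ) + ν) ^ k * x ^ (α * N + β) :=
  stmt_4_general ε ν β α x S hS k N
end

section
/- Let ε ∈ {1, −1}, let ν, β be nonnegative integers, let α be a positive integer, and let x ∈ ℤ. Then for every N ≥ 1 the identity ∑_{n=0}^{N−1} ε^n (n+ν)! [x^{2α}(n+ν)^2 − (x^{2α} − 3εx^α + 1)] x^{αn+β} = ε·ν!·[(2−ν)x^α − ε]·x^β + [(N+ν−2)x^α + ε]·ε^{N−1}·(N+ν)!·x^{αN+β} holds in ℤ. -/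
/-!
The summand is a forward difference: with `G n = ε^(n+1) ((n+ν-2) x^α + ε) (n+ν)! x^(αn+β)`,
one has `G (n+1) - G n` equal to the `n`-th summand as soon as `ε² = 1`, so the sum telescopes
to `G N - G 0`.
-/

section FactorialTelescope

variable {R : Type*} [CommRing R] (ε : R) (ν α β : ℕ) (x : R)

def factorialPowPrimitive (n : ℕ) : R :=
  ε ^ (n + 1) * (((n : R) + ν - 2) * x ^ α + ε) * ((n + ν).factorial : R) * x ^ (α * n + β)

variable {ε}

theorem factorialPowPrimitive_succ_sub (hε : ε ^ 2 = 1) (n : ℕ) :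
    factorialPowPrimitive ε ν α β x (n + 1) - factorialPowPrimitive ε ν α β x n =
      ε ^ n * ((n + ν).factorial : R) *
        (x ^ (2 * α) * ((n : R) + ν) ^ 2 - (x ^ (2 * α) - 3 * ε * x ^ α + 1)) *
        x ^ (α * n + β) := by
  have hfac : ((n + 1 + ν).factorial : R) = ((n : R) + ν + 1) * ((n + ν).factorial : R) := by
    rw [Nat.add_right_comm, Nat.factorial_succ]
    push_cast
    ring
  have hpow : x ^ (α * (n + 1) + β) = x ^ α * x ^ (α * n + β) := by
    rw [← pow_add]
    ring_nf
  have hpow2 : x ^ (2 * α) = x ^ α * x ^ α := by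
    rw [← pow_add, two_mul]
  unfold factorialPowPrimitive
  rw [hfac, hpow, hpow2]
  push_cast
  linear_combination ε ^ n * ((n + ν).factorial : R) * x ^ (α * n + β) *
    ((((n : R) + ν) ^ 2 - 1) * x ^ α * x ^ α + ε * ((n : R) + ν + 1) * x ^ α - 1) * hε

theorem sum_range_factorialPow_eq_sub (hε : ε ^ 2 = 1) (N : ℕ) :
    ∑ n ∈ Finset.range N, ε ^ n * ((n + ν).factorial : R) *
        (x ^ (2 * α) * ((n : R) + ν) ^ 2 - (x ^ (2 * α) - 3 * ε * x ^ α + 1)) *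
        x ^ (α * n + β) =
      factorialPowPrimitive ε ν α β x N - factorialPowPrimitive ε ν α β x 0 := by
  rw [← Finset.sum_range_sub]
  exact Finset.sum_congr rfl fun n _ => (factorialPowPrimitive_succ_sub ν α β x hε n).symm

end FactorialTelescope

theorem stmt_6_general (ε : ℤ) (hε : ε = 1 ∨ ε = -1) (ν β : ℕ) (α : ℕ)
    (x : ℤ) (N : ℕ) (hN : 1 ≤ N) :
    (∑ n ∈ Finset.range N,
        ε ^ n * ((n + ν).factorial : ℤ) *
          (x ^ (2 * α) * ((n : ℤ) + ν) ^ 2 - (x ^ (2 * α) - 3 * ε * x ^ α + 1)) *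
          x ^ (α * n + β)) =
      ε * (ν.factorial : ℤ) * ((2 - (ν : ℤ)) * x ^ α - ε) * x ^ β +
        (((N : ℤ) + ν - 2) * x ^ α + ε) * ε ^ (N - 1) *
          ((N + ν).factorial : ℤ) * x ^ (α * N + β) := by
  have hε2 : ε ^ 2 = 1 := by rcases hε with rfl | rfl <;> norm_num
  have hεN : ε ^ (N + 1) = ε ^ (N - 1) := by
    rw [show N + 1 = N - 1 + 2 by omega, pow_add, hε2, mul_one]
  rw [sum_range_factorialPow_eq_sub ν α β x hε2, factorialPowPrimitive, factorialPowPrimitive,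
    hεN]
  simp only [CharP.cast_eq_zero, zero_add, mul_zero]
  ring

theorem stmt_6 (ε : ℤ) (hε : ε = 1 ∨ ε = -1) (ν β : ℕ) (α : ℕ) (hα : 0 < α)
    (x : ℤ) (N : ℕ) (hN : 1 ≤ N) :
    (∑ n ∈ Finset.range N,
        ε ^ n * ((n + ν).factorial : ℤ) *
          (x ^ (2 * α) * ((n : ℤ) + ν) ^ 2 - (x ^ (2 * α) - 3 * ε * x ^ α + 1)) *
          x ^ (α * n + β)) =
      ε * (ν.factorial : ℤ) * ((2 - (ν : ℤ)) * x ^ α - ε) * x ^ β +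
        (((N : ℤ) + ν - 2) * x ^ α + ε) * ε ^ (N - 1) *
          ((N + ν).factorial : ℤ) * x ^ (α * N + β) :=
  stmt_6_general ε hε ν β α x N hN
end

section
/- Let ε ∈ {1, −1}, let ν, β be nonnegative integers, let α be a positive integer, and let x ∈ ℤ. Suppose U : ℕ → ℤ satisfies the U-recurrence, V : ℕ → ℤ satisfies the V-recurrence, and A : ℕ × ℕ → ℤ satisfies the A-recurrence. Then for every k ≥ 1 and every N ≥ 1 the identity ∑_{n=0}^{N−1} ε^n (n+ν)! [(n+ν)^k x^{kα} + U(k)] x^{αn+β} = V(k−1) + A(k−1, N)·ε^{N−1}·(N+ν)!·x^{αN+β} holds in ℤ. -/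
/-!
Fix `N` and view both sides of the identity as functions of `k ≥ 1`. Multiplying the summand for
exponent `ℓ` by `binom(k+1, ℓ) x^{(k+1-ℓ)α}` and summing over `ℓ`, the binomial theorem turns the
powers `(n+ν)^ℓ x^{ℓα}` into `x^{(k+1)α} (n+ν+1)^{k+1}`, which together with `(n+ν)! (n+ν+1) =
(n+ν+1)!` makes the left side telescope in `n`. The right side satisfies the same recurrence, with
the same inhomogeneous term, by the recurrences for `V` and `A`. Both sides agree at `k = 1`, and
the recurrence at `k` determines the value at `k + 1`, so they agree for all `k ≥ 1`.
-/

open Finset Nat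

theorem pow_add_two_of_mul_self_eq_one {M : Type*} [Monoid M] {ε : M} (hε : ε * ε = 1) (n : ℕ) :
    ε ^ (n + 2) = ε ^ n := by
  rw [pow_add, sq, hε, mul_one]

theorem pow_succ_eq_pow_pred_of_mul_self_eq_one {M : Type*} [Monoid M] {ε : M} (hε : ε * ε = 1)
    {n : ℕ} (hn : 1 ≤ n) : ε ^ (n + 1) = ε ^ (n - 1) := by
  rw [← pow_add_two_of_mul_self_eq_one hε (n - 1)]
  congr 1
  omega

theorem sum_Icc_one_choose_mul_pow {R : Type*} [CommSemiring R] (a b : R) (m : ℕ) :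
    ∑ ℓ ∈ Icc 1 m, (m.choose ℓ : R) * a ^ (m - ℓ) * b ^ ℓ + a ^ m = (a + b) ^ m := by
  have hrange : range (m + 1) = insert 0 (Icc 1 m) := by
    ext ℓ
    simp only [mem_range, mem_insert, mem_Icc]
    omega
  rw [add_comm a, add_pow, hrange, sum_insert (by simp)]
  simp only [pow_zero, Nat.sub_zero, choose_zero_right, cast_one, one_mul, mul_one]
  rw [add_comm]
  exact congrArg (a ^ m + ·) (sum_congr rfl fun _ _ => by ring)

theorem eq_of_sum_Icc_recurrence {R : Type*} [Ring R] (c : ℕ → ℕ → R) (hc : ∀ k, c k (k + 1) = 1)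
    (ε : R) (g F G : ℕ → R) (h1 : F 1 = G 1)
    (hF : ∀ k, 1 ≤ k → ∑ ℓ ∈ Icc 1 (k + 1), c k ℓ * F ℓ = ε * F k + g k)
    (hG : ∀ k, 1 ≤ k → ∑ ℓ ∈ Icc 1 (k + 1), c k ℓ * G ℓ = ε * G k + g k) :
    ∀ k, 1 ≤ k → F k = G k := by
  intro k
  induction k using Nat.strong_induction_on with
  | _ k ih =>
    intro hk
    obtain _ | _ | m := k
    · omega
    · exact h1
    have hlow : ∀ ℓ ∈ Icc 1 (m + 1), F ℓ = G ℓ := fun ℓ hℓ =>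
      ih ℓ (by grind) (mem_Icc.mp hℓ).1
    have hF' := hF (m + 1) (by omega)
    have hG' := hG (m + 1) (by omega)
    rw [sum_Icc_succ_top (by omega), hc, one_mul] at hF' hG'
    rw [sum_congr rfl fun ℓ hℓ => by rw [hlow ℓ hℓ], hlow (m + 1) (by simp)] at hF'
    exact add_left_cancel (hF'.trans hG'.symm)

section

variable (ε x : ℤ) (ν β α : ℕ)

theorem sum_range_factorial_telescope (hε : ε * ε = 1) (k N : ℕ) :
    ∑ n ∈ range N, ε ^ n * ((n + ν)! : ℤ) * x ^ (α * n + β) *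
        (x ^ ((k + 1) * α) * ((n : ℤ) + ν + 1) ^ (k + 1) - ε * x ^ (k * α) * ((n : ℤ) + ν) ^ k) =
      ε ^ (N + 1) * ((N + ν)! : ℤ) * ((N : ℤ) + ν) ^ k * x ^ (k * α + α * N + β) -
        ε * (ν ! : ℤ) * (ν : ℤ) ^ k * x ^ (k * α + β) := by
  have h := sum_range_sub
    (fun n => ε ^ (n + 1) * ((n + ν)! : ℤ) * ((n : ℤ) + ν) ^ k * x ^ (k * α + α * n + β)) N
  simp only [zero_add, cast_zero, mul_zero, add_zero, pow_one] at h
  rw [← h]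
  refine sum_congr rfl fun n _ => ?_
  rw [Nat.add_right_comm n 1 ν, factorial_succ, pow_add_two_of_mul_self_eq_one hε]
  push_cast
  ring

theorem sum_range_factorial_telescope_zero (hε : ε * ε = 1) (N : ℕ) :
    ∑ n ∈ range N, ε ^ n * ((n + ν)! : ℤ) * (((n : ℤ) + ν) * x ^ α + (x ^ α - ε)) *
        x ^ (α * n + β) =
      ε ^ (N + 1) * ((N + ν)! : ℤ) * x ^ (α * N + β) - ε * (ν ! : ℤ) * x ^ β := by
  have h := sum_range_factorial_telescope ε x ν β α hε 0 N
  simp only [zero_add, zero_mul, one_mul, pow_zero, pow_one, mul_one] at h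
  rw [← h]
  exact sum_congr rfl fun n _ => by ring

theorem lhs_recurrence (hε : ε * ε = 1) (U : ℕ → ℤ)
    (hU : ∀ k : ℕ, 1 ≤ k →
      (∑ ℓ ∈ Icc 1 (k + 1), ((k + 1).choose ℓ : ℤ) * x ^ ((k + 1 - ℓ) * α) * U ℓ) -
        ε * U k - x ^ ((k + 1) * α) = 0)
    (N k : ℕ) (hk : 1 ≤ k) :
    ∑ ℓ ∈ Icc 1 (k + 1), ((k + 1).choose ℓ : ℤ) * x ^ ((k + 1 - ℓ) * α) *
        ∑ n ∈ range N, ε ^ n * ((n + ν)! : ℤ) *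
          (((n : ℤ) + ν) ^ ℓ * x ^ (ℓ * α) + U ℓ) * x ^ (α * n + β) =
      ε * ∑ n ∈ range N, ε ^ n * ((n + ν)! : ℤ) *
          (((n : ℤ) + ν) ^ k * x ^ (k * α) + U k) * x ^ (α * n + β) +
        (ε ^ (N + 1) * ((N + ν)! : ℤ) * ((N : ℤ) + ν) ^ k * x ^ (k * α + α * N + β) -
          ε * (ν ! : ℤ) * (ν : ℤ) ^ k * x ^ (k * α + β)) := by
  set c : ℕ → ℤ := fun ℓ => ((k + 1).choose ℓ : ℤ) * x ^ ((k + 1 - ℓ) * α)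
  have hbinom (y : ℤ) : ∑ ℓ ∈ Icc 1 (k + 1), c ℓ * (y ^ ℓ * x ^ (ℓ * α)) =
      x ^ ((k + 1) * α) * ((y + 1) ^ (k + 1) - 1) := by
    have h := sum_Icc_one_choose_mul_pow (x ^ α) (y * x ^ α) (k + 1)
    rw [sum_congr rfl fun ℓ _ => by rw [mul_pow, ← pow_mul', ← pow_mul']] at h
    rw [show x ^ α + y * x ^ α = x ^ α * (y + 1) by ring, mul_pow, ← pow_mul'] at h
    linear_combination h
  have hUk : ∑ ℓ ∈ Icc 1 (k + 1), c ℓ * U ℓ = ε * U k + x ^ ((k + 1) * α) := by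
    linear_combination hU k hk
  calc ∑ ℓ ∈ Icc 1 (k + 1), c ℓ * ∑ n ∈ range N, ε ^ n * ((n + ν)! : ℤ) *
          (((n : ℤ) + ν) ^ ℓ * x ^ (ℓ * α) + U ℓ) * x ^ (α * n + β)
      = ∑ n ∈ range N, ε ^ n * ((n + ν)! : ℤ) * x ^ (α * n + β) *
          (∑ ℓ ∈ Icc 1 (k + 1), c ℓ * (((n : ℤ) + ν) ^ ℓ * x ^ (ℓ * α)) +
            ∑ ℓ ∈ Icc 1 (k + 1), c ℓ * U ℓ) := by
        simp_rw [mul_sum, ← sum_add_distrib, mul_sum]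
        rw [sum_comm]
        exact sum_congr rfl fun n _ => sum_congr rfl fun ℓ _ => by ring
    _ = ∑ n ∈ range N, ε ^ n * ((n + ν)! : ℤ) * x ^ (α * n + β) *
          (x ^ ((k + 1) * α) * (((n : ℤ) + ν + 1) ^ (k + 1) - 1) +
            (ε * U k + x ^ ((k + 1) * α))) := by
        simp only [hbinom, hUk]
    _ = ∑ n ∈ range N, ε ^ n * ((n + ν)! : ℤ) * x ^ (α * n + β) *
          (x ^ ((k + 1) * α) * ((n : ℤ) + ν + 1) ^ (k + 1) - ε * x ^ (k * α) * ((n : ℤ) + ν) ^ k) +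
        ε * ∑ n ∈ range N, ε ^ n * ((n + ν)! : ℤ) *
          (((n : ℤ) + ν) ^ k * x ^ (k * α) + U k) * x ^ (α * n + β) := by
        rw [mul_sum, ← sum_add_distrib]
        exact sum_congr rfl fun n _ => by ring
    _ = _ := by
        rw [sum_range_factorial_telescope ε x ν β α hε]
        ring

theorem rhs_recurrence (hε : ε * ε = 1) (V : ℕ → ℤ) (A : ℕ → ℕ → ℤ)
    (hV : ∀ k : ℕ, 1 ≤ k →
      (∑ ℓ ∈ Icc 1 (k + 1), ((k + 1).choose ℓ : ℤ) * x ^ ((k + 1 - ℓ) * α) * V (ℓ - 1)) -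
        ε * V (k - 1) + ε * (ν ! : ℤ) * (ν : ℤ) ^ k * x ^ (k * α + β) = 0)
    (hA : ∀ k : ℕ, 1 ≤ k → ∀ N : ℕ,
      (∑ ℓ ∈ Icc 1 (k + 1), ((k + 1).choose ℓ : ℤ) * x ^ ((k + 1 - ℓ) * α) * A (ℓ - 1) N) -
        ε * A (k - 1) N - ((N : ℤ) + ν) ^ k * x ^ (k * α) = 0)
    (N : ℕ) (hN : 1 ≤ N) (k : ℕ) (hk : 1 ≤ k) :
    ∑ ℓ ∈ Icc 1 (k + 1), ((k + 1).choose ℓ : ℤ) * x ^ ((k + 1 - ℓ) * α) *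
        (V (ℓ - 1) + A (ℓ - 1) N * ε ^ (N - 1) * ((N + ν)! : ℤ) * x ^ (α * N + β)) =
      ε * (V (k - 1) + A (k - 1) N * ε ^ (N - 1) * ((N + ν)! : ℤ) * x ^ (α * N + β)) +
        (ε ^ (N + 1) * ((N + ν)! : ℤ) * ((N : ℤ) + ν) ^ k * x ^ (k * α + α * N + β) -
          ε * (ν ! : ℤ) * (ν : ℤ) ^ k * x ^ (k * α + β)) := by
  set c : ℕ → ℤ := fun ℓ => ((k + 1).choose ℓ : ℤ) * x ^ ((k + 1 - ℓ) * α)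
  set e : ℤ := ε ^ (N - 1) * ((N + ν)! : ℤ) * x ^ (α * N + β)
  have hsplit : ∑ ℓ ∈ Icc 1 (k + 1), c ℓ * (V (ℓ - 1) + A (ℓ - 1) N * ε ^ (N - 1) *
      ((N + ν)! : ℤ) * x ^ (α * N + β)) =
      ∑ ℓ ∈ Icc 1 (k + 1), c ℓ * V (ℓ - 1) + (∑ ℓ ∈ Icc 1 (k + 1), c ℓ * A (ℓ - 1) N) * e := by
    rw [sum_mul, ← sum_add_distrib]
    exact sum_congr rfl fun _ _ => by ring
  rw [hsplit, pow_succ_eq_pow_pred_of_mul_self_eq_one hε hN]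
  linear_combination hV k hk + e * hA k hk N

end

theorem stmt_7_general (ε : ℤ) (hε : ε = 1 ∨ ε = -1) (ν β : ℕ) (α : ℕ)
    (x : ℤ) (U : ℕ → ℤ) (V : ℕ → ℤ) (A : ℕ → ℕ → ℤ)
    (hU1 : U 1 = x ^ α - ε)
    (hU : ∀ k : ℕ, 1 ≤ k →
      (∑ ℓ ∈ Finset.Icc 1 (k + 1),
          ((k + 1).choose ℓ : ℤ) * x ^ ((k + 1 - ℓ) * α) * U ℓ) -
        ε * U k - x ^ ((k + 1) * α) = 0)
    (hV0 : V 0 = -ε * (ν.factorial : ℤ) * x ^ β)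
    (hV : ∀ k : ℕ, 1 ≤ k →
      (∑ ℓ ∈ Finset.Icc 1 (k + 1),
          ((k + 1).choose ℓ : ℤ) * x ^ ((k + 1 - ℓ) * α) * V (ℓ - 1)) -
        ε * V (k - 1) + ε * (ν.factorial : ℤ) * (ν : ℤ) ^ k * x ^ (k * α + β) = 0)
    (hA0 : ∀ N : ℕ, A 0 N = 1)
    (hA : ∀ k : ℕ, 1 ≤ k → ∀ N : ℕ,
      (∑ ℓ ∈ Finset.Icc 1 (k + 1),
          ((k + 1).choose ℓ : ℤ) * x ^ ((k + 1 - ℓ) * α) * A (ℓ - 1) N) -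
        ε * A (k - 1) N - ((N : ℤ) + ν) ^ k * x ^ (k * α) = 0) :
    ∀ k : ℕ, 1 ≤ k → ∀ N : ℕ, 1 ≤ N →
      (∑ n ∈ Finset.range N,
          ε ^ n * ((n + ν).factorial : ℤ) *
            (((n : ℤ) + ν) ^ k * x ^ (k * α) + U k) * x ^ (α * n + β)) =
        V (k - 1) +
          A (k - 1) N * ε ^ (N - 1) * ((N + ν).factorial : ℤ) * x ^ (α * N + β) := by
  have hε2 : ε * ε = 1 := by rcases hε with rfl | rfl <;> norm_num
  intro k hk N hN
  refine eq_of_sum_Icc_recurrence (fun k ℓ => ((k + 1).choose ℓ : ℤ) * x ^ ((k + 1 - ℓ) * α))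
    (by simp) ε _ _ _ ?_ (lhs_recurrence ε x ν β α hε2 U hU N)
    (rhs_recurrence ε x ν β α hε2 V A hV hA N hN) k hk
  simp only [hU1, hV0, hA0, Nat.sub_self, pow_one, one_mul]
  rw [sum_range_factorial_telescope_zero ε x ν β α hε2,
    pow_succ_eq_pow_pred_of_mul_self_eq_one hε2 hN]
  ring

theorem stmt_7 (ε : ℤ) (hε : ε = 1 ∨ ε = -1) (ν β : ℕ) (α : ℕ) (hα : 0 < α)
    (x : ℤ) (U : ℕ → ℤ) (V : ℕ → ℤ) (A : ℕ → ℕ → ℤ)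
    (hU1 : U 1 = x ^ α - ε)
    (hU : ∀ k : ℕ, 1 ≤ k →
      (∑ ℓ ∈ Finset.Icc 1 (k + 1),
          ((k + 1).choose ℓ : ℤ) * x ^ ((k + 1 - ℓ) * α) * U ℓ) -
        ε * U k - x ^ ((k + 1) * α) = 0)
    (hV0 : V 0 = -ε * (ν.factorial : ℤ) * x ^ β)
    (hV : ∀ k : ℕ, 1 ≤ k →
      (∑ ℓ ∈ Finset.Icc 1 (k + 1),
          ((k + 1).choose ℓ : ℤ) * x ^ ((k + 1 - ℓ) * α) * V (ℓ - 1)) -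
        ε * V (k - 1) + ε * (ν.factorial : ℤ) * (ν : ℤ) ^ k * x ^ (k * α + β) = 0)
    (hA0 : ∀ N : ℕ, A 0 N = 1)
    (hA : ∀ k : ℕ, 1 ≤ k → ∀ N : ℕ,
      (∑ ℓ ∈ Finset.Icc 1 (k + 1),
          ((k + 1).choose ℓ : ℤ) * x ^ ((k + 1 - ℓ) * α) * A (ℓ - 1) N) -
        ε * A (k - 1) N - ((N : ℤ) + ν) ^ k * x ^ (k * α) = 0) :
    ∀ k : ℕ, 1 ≤ k → ∀ N : ℕ, 1 ≤ N →
      (∑ n ∈ Finset.range N,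
          ε ^ n * ((n + ν).factorial : ℤ) *
            (((n : ℤ) + ν) ^ k * x ^ (k * α) + U k) * x ^ (α * n + β)) =
        V (k - 1) +
          A (k - 1) N * ε ^ (N - 1) * ((N + ν).factorial : ℤ) * x ^ (α * N + β) :=
  stmt_7_general ε hε ν β α x U V A hU1 hU hV0 hV hA0 hA
end

section
/- Let ε ∈ {1, −1}, let ν be a nonnegative integer, let α be a positive integer, and let x ∈ ℤ. Suppose U : ℕ → ℤ satisfies the U-recurrence and A : ℕ × ℕ → ℤ satisfies the A-recurrence. Then for every k ≥ 1 the identity U(k) = (ν+1)·x^α·A(k−1, 1) − ε·A(k−1, 0) − ν^k·x^{kα} holds in ℤ. -/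
/-!
With `y = x ^ α`, both recurrences are instances of the linear recurrence
`L f k := ∑_{ℓ=1}^{k+1} C(k+1, ℓ) y^(k+1-ℓ) f ℓ - ε f k`, which is triangular with leading
coefficient `1`, so a solution of `L f k = r k` (`k ≥ 1`) is determined by `f 1`.
By linearity and the binomial theorem `L (ℓ ↦ z^ℓ) k = (y+z)^(k+1) - y^(k+1) - ε z^k`, the
right-hand side `V` of the claimed identity satisfies `L V k = y^(k+1)`, the U-recurrence, and
`V 1 = y - ε = U 1`.
-/

open Finset

variable {R : Type*} [CommRing R]

def binomialRecurrenceOp (y ε : R) : (ℕ → R) →ₗ[R] ℕ → R where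
  toFun f k := ∑ ℓ ∈ Icc 1 (k + 1), ((k + 1).choose ℓ : R) * y ^ (k + 1 - ℓ) * f ℓ - ε * f k
  map_add' f g := by
    ext k
    simp only [Pi.add_apply, mul_add, sum_add_distrib]
    ring
  map_smul' c f := by
    ext k
    simp only [Pi.smul_apply, smul_eq_mul, RingHom.id_apply]
    rw [mul_sub, mul_sum, mul_left_comm c ε]
    congr 1
    exact sum_congr rfl fun ℓ _ => by ring

section

variable (y ε : R)

theorem binomialRecurrenceOp_apply (f : ℕ → R) (k : ℕ) :
    binomialRecurrenceOp y ε f k =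
      ∑ ℓ ∈ Icc 1 (k + 1), ((k + 1).choose ℓ : R) * y ^ (k + 1 - ℓ) * f ℓ - ε * f k :=
  rfl

theorem binomialRecurrenceOp_apply_pow (z : R) (k : ℕ) :
    binomialRecurrenceOp y ε (fun ℓ => z ^ ℓ) k = (y + z) ^ (k + 1) - y ^ (k + 1) - ε * z ^ k := by
  rw [binomialRecurrenceOp_apply, add_comm y, add_pow, range_eq_Ico, sum_eq_sum_Ico_succ_bot (by omega)]
  simp only [pow_zero, Nat.choose_zero_right, Nat.cast_one, mul_one, one_mul, Nat.sub_zero,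
    add_sub_cancel_left]
  congr 1
  exact sum_congr rfl fun ℓ _ => by ring

theorem binomialRecurrenceOp_apply_of_eqOn_zero {f : ℕ → R} {k : ℕ} (hk : 1 ≤ k) (hf : ∀ ℓ ∈ Icc 1 k, f ℓ = 0) :
    binomialRecurrenceOp y ε f k = f (k + 1) := by
  rw [binomialRecurrenceOp_apply, sum_Icc_succ_top (by omega), sum_eq_zero fun ℓ hℓ => by rw [hf ℓ hℓ, mul_zero],
    hf k (mem_Icc.mpr ⟨hk, le_rfl⟩)]
  simp

theorem eq_zero_of_binomialRecurrenceOp_eq_zero {f : ℕ → R} (h1 : f 1 = 0)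
    (hf : ∀ k, 1 ≤ k → binomialRecurrenceOp y ε f k = 0) : ∀ k, 1 ≤ k → f k = 0 := by
  suffices ∀ n, ∀ ℓ ∈ Icc 1 n, f ℓ = 0 from fun k hk => this k k (mem_Icc.mpr ⟨hk, le_rfl⟩)
  intro n
  induction n with
  | zero => simp
  | succ n ih =>
    intro ℓ hℓ
    rcases (mem_Icc.mp hℓ).2.lt_or_eq with hlt | rfl
    · exact ih ℓ (mem_Icc.mpr ⟨(mem_Icc.mp hℓ).1, by omega⟩)
    rcases Nat.eq_zero_or_pos n with rfl | hn
    · exact h1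
    rw [← binomialRecurrenceOp_apply_of_eqOn_zero y ε hn ih, hf n hn]

theorem eq_of_binomialRecurrenceOp_eq {f g : ℕ → R} (h1 : f 1 = g 1)
    (hfg : ∀ k, 1 ≤ k → binomialRecurrenceOp y ε f k = binomialRecurrenceOp y ε g k) :
    ∀ k, 1 ≤ k → f k = g k := fun k hk =>
  sub_eq_zero.mp <| eq_zero_of_binomialRecurrenceOp_eq_zero y ε (f := f - g) (sub_eq_zero.mpr h1)
    (fun k hk => by rw [map_sub, Pi.sub_apply, hfg k hk, sub_self]) k hk

end

theorem stmt_9_general (ε : ℤ) (ν : ℕ) (α : ℕ)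
    (x : ℤ) (U : ℕ → ℤ) (A : ℕ → ℕ → ℤ)
    (hU1 : U 1 = x ^ α - ε)
    (hU : ∀ k : ℕ, 1 ≤ k →
      (∑ ℓ ∈ Finset.Icc 1 (k + 1),
          ((k + 1).choose ℓ : ℤ) * x ^ ((k + 1 - ℓ) * α) * U ℓ) -
        ε * U k - x ^ ((k + 1) * α) = 0)
    (hA0 : ∀ N : ℕ, A 0 N = 1)
    (hA : ∀ k : ℕ, 1 ≤ k → ∀ N : ℕ,
      (∑ ℓ ∈ Finset.Icc 1 (k + 1),
          ((k + 1).choose ℓ : ℤ) * x ^ ((k + 1 - ℓ) * α) * A (ℓ - 1) N) -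
        ε * A (k - 1) N - ((N : ℤ) + ν) ^ k * x ^ (k * α) = 0) :
    ∀ k : ℕ, 1 ≤ k →
      U k = ((ν : ℤ) + 1) * x ^ α * A (k - 1) 1 - ε * A (k - 1) 0 -
        (ν : ℤ) ^ k * x ^ (k * α) := by
  set y := x ^ α
  set L := binomialRecurrenceOp y ε
  have hLU (k) (hk : 1 ≤ k) : L U k = y ^ (k + 1) := by
    simpa only [L, binomialRecurrenceOp_apply, pow_mul', sub_eq_zero] using hU k hk
  have hLA (N k) (hk : 1 ≤ k) : L (fun ℓ => A (ℓ - 1) N) k = ((N : ℤ) + ν) ^ k * y ^ k := by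
    simpa only [L, binomialRecurrenceOp_apply, pow_mul', sub_eq_zero] using hA k hk N
  set V : ℕ → ℤ := ((ν + 1) * y) • (fun ℓ => A (ℓ - 1) 1) - ε • (fun ℓ => A (ℓ - 1) 0) -
    fun ℓ => (ν * y) ^ ℓ
  have hLV (k) (hk : 1 ≤ k) : L V k = y ^ (k + 1) := by
    simp only [V, map_sub, map_smul, Pi.sub_apply, Pi.smul_apply, smul_eq_mul, hLA _ k hk,
      L, binomialRecurrenceOp_apply_pow]
    rw [show y + ν * y = (ν + 1) * y by ring]
    push_cast [mul_pow]
    ring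
  have hV1 : U 1 = V 1 := by
    simp only [V, Pi.sub_apply, Pi.smul_apply, smul_eq_mul, Nat.sub_self, hA0, hU1, pow_one]
    ring
  intro k hk
  rw [eq_of_binomialRecurrenceOp_eq y ε hV1 (fun k hk => (hLU k hk).trans (hLV k hk).symm) k hk]
  simp only [V, Pi.sub_apply, Pi.smul_apply, smul_eq_mul, mul_pow, y, ← pow_mul']

theorem stmt_9 (ε : ℤ) (hε : ε = 1 ∨ ε = -1) (ν : ℕ) (α : ℕ) (hα : 0 < α)
    (x : ℤ) (U : ℕ → ℤ) (A : ℕ → ℕ → ℤ)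
    (hU1 : U 1 = x ^ α - ε)
    (hU : ∀ k : ℕ, 1 ≤ k →
      (∑ ℓ ∈ Finset.Icc 1 (k + 1),
          ((k + 1).choose ℓ : ℤ) * x ^ ((k + 1 - ℓ) * α) * U ℓ) -
        ε * U k - x ^ ((k + 1) * α) = 0)
    (hA0 : ∀ N : ℕ, A 0 N = 1)
    (hA : ∀ k : ℕ, 1 ≤ k → ∀ N : ℕ,
      (∑ ℓ ∈ Finset.Icc 1 (k + 1),
          ((k + 1).choose ℓ : ℤ) * x ^ ((k + 1 - ℓ) * α) * A (ℓ - 1) N) -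
        ε * A (k - 1) N - ((N : ℤ) + ν) ^ k * x ^ (k * α) = 0) :
    ∀ k : ℕ, 1 ≤ k →
      U k = ((ν : ℤ) + 1) * x ^ α * A (k - 1) 1 - ε * A (k - 1) 0 -
        (ν : ℤ) ^ k * x ^ (k * α) :=
  stmt_9_general ε ν α x U A hU1 hU hA0 hA
end

section
/- Let ε ∈ {1, −1}, let ν, β be nonnegative integers, let α be a positive integer, and let x ∈ ℤ. Suppose U : ℕ → ℤ satisfies the U-recurrence, V : ℕ → ℤ satisfies the V-recurrence, and A : ℕ × ℕ → ℤ satisfies the A-recurrence. Then for every k ≥ 1 the identity V(k−1) = −ε·ν!·x^β·A(k−1, 0) holds in ℤ. -/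
/-!
The `V`- and `A`-recurrences share one linear operator `f ↦ binomRec x α ε f`, whose value at `k`
involves `f k` with coefficient `1` (the term `ℓ = k + 1`) and otherwise only earlier values, so a
sequence is determined by its value at `0` and its image under the operator. Since the inhomogeneous term of the `V`-recurrence is
`-ε ν! xᵝ` times that of the `A`-recurrence at `N = 0`, and so are the initial values,
`V = -ε ν! xᵝ · A(·, 0)`.
-/

open Finset

section BinomRec

variable {R : Type*} [CommRing R]

def binomRec (x : R) (α : ℕ) (ε : R) : (ℕ → R) →ₗ[R] ℕ → R where
  toFun f k := (∑ ℓ ∈ Icc 1 (k + 1), ((k + 1).choose ℓ : R) * x ^ ((k + 1 - ℓ) * α) * f (ℓ - 1))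
    - ε * f (k - 1)
  map_add' f g := by
    ext k
    simp only [Pi.add_apply, mul_add, sum_add_distrib]
    ring
  map_smul' c f := by
    ext k
    simp only [Pi.smul_apply, smul_eq_mul, RingHom.id_apply, mul_sub, mul_sum]
    congr 1
    · exact sum_congr rfl fun _ _ => by ring
    · ring

lemma binomRec_apply (x : R) (α : ℕ) (ε : R) (f : ℕ → R) (k : ℕ) :
    binomRec x α ε f k =
      (∑ ℓ ∈ Icc 1 (k + 1), ((k + 1).choose ℓ : R) * x ^ ((k + 1 - ℓ) * α) * f (ℓ - 1))
        - ε * f (k - 1) :=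
  rfl

lemma binomRec_succ (x : R) (α : ℕ) (ε : R) (f : ℕ → R) (n : ℕ) :
    binomRec x α ε f (n + 1) = f (n + 1) +
      (∑ ℓ ∈ Icc 1 (n + 1), ((n + 2).choose ℓ : R) * x ^ ((n + 2 - ℓ) * α) * f (ℓ - 1))
      - ε * f n := by
  rw [binomRec_apply, sum_Icc_succ_top (by omega)]
  simp only [Nat.choose_self, Nat.sub_self, zero_mul, pow_zero, Nat.add_sub_cancel, Nat.cast_one,
    mul_one, one_mul]
  ring

lemma eq_zero_of_binomRec_eq_zero {x : R} {α : ℕ} {ε : R} {f : ℕ → R} (h0 : f 0 = 0)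
    (hrec : ∀ k, 1 ≤ k → binomRec x α ε f k = 0) : f = 0 := by
  funext n
  induction n using Nat.strong_induction_on with
  | _ n ih =>
    cases n with
    | zero => exact h0
    | succ n =>
      have hlower : ∑ ℓ ∈ Icc 1 (n + 1),
          ((n + 2).choose ℓ : R) * x ^ ((n + 2 - ℓ) * α) * f (ℓ - 1) = 0 :=
        sum_eq_zero fun ℓ hℓ => by
          rw [ih (ℓ - 1) (by simp at hℓ; omega), Pi.zero_apply, mul_zero]
      have := hrec (n + 1) (by omega)
      rw [binomRec_succ, hlower, ih n (by omega)] at this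
      simpa using this

end BinomRec

theorem stmt_10_general (ε : ℤ) (ν β : ℕ) (α : ℕ)
    (x : ℤ) (V : ℕ → ℤ) (A : ℕ → ℕ → ℤ)
    (hV0 : V 0 = -ε * (ν.factorial : ℤ) * x ^ β)
    (hV : ∀ k : ℕ, 1 ≤ k →
      (∑ ℓ ∈ Finset.Icc 1 (k + 1),
          ((k + 1).choose ℓ : ℤ) * x ^ ((k + 1 - ℓ) * α) * V (ℓ - 1)) -
        ε * V (k - 1) + ε * (ν.factorial : ℤ) * (ν : ℤ) ^ k * x ^ (k * α + β) = 0)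
    (hA0 : ∀ N : ℕ, A 0 N = 1)
    (hA : ∀ k : ℕ, 1 ≤ k → ∀ N : ℕ,
      (∑ ℓ ∈ Finset.Icc 1 (k + 1),
          ((k + 1).choose ℓ : ℤ) * x ^ ((k + 1 - ℓ) * α) * A (ℓ - 1) N) -
        ε * A (k - 1) N - ((N : ℤ) + ν) ^ k * x ^ (k * α) = 0) :
    ∀ k : ℕ, 1 ≤ k →
      V (k - 1) = -ε * (ν.factorial : ℤ) * x ^ β * A (k - 1) 0 := by
  set c : ℤ := -ε * (ν.factorial : ℤ) * x ^ β
  have hdiff : V - c • (fun n => A n 0) = 0 := by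
    refine eq_zero_of_binomRec_eq_zero (x := x) (α := α) (ε := ε) ?_ fun k hk => ?_
    · simp [hV0, hA0, c]
    · rw [map_sub, map_smul, Pi.sub_apply, Pi.smul_apply, smul_eq_mul, binomRec_apply,
        binomRec_apply]
      linear_combination hV k hk - c * hA k hk 0
  intro k _
  exact sub_eq_zero.mp (congrFun hdiff (k - 1))

theorem stmt_10 (ε : ℤ) (hε : ε = 1 ∨ ε = -1) (ν β : ℕ) (α : ℕ) (hα : 0 < α)
    (x : ℤ) (U : ℕ → ℤ) (V : ℕ → ℤ) (A : ℕ → ℕ → ℤ)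
    (hU1 : U 1 = x ^ α - ε)
    (hU : ∀ k : ℕ, 1 ≤ k →
      (∑ ℓ ∈ Finset.Icc 1 (k + 1),
          ((k + 1).choose ℓ : ℤ) * x ^ ((k + 1 - ℓ) * α) * U ℓ) -
        ε * U k - x ^ ((k + 1) * α) = 0)
    (hV0 : V 0 = -ε * (ν.factorial : ℤ) * x ^ β)
    (hV : ∀ k : ℕ, 1 ≤ k →
      (∑ ℓ ∈ Finset.Icc 1 (k + 1),
          ((k + 1).choose ℓ : ℤ) * x ^ ((k + 1 - ℓ) * α) * V (ℓ - 1)) -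
        ε * V (k - 1) + ε * (ν.factorial : ℤ) * (ν : ℤ) ^ k * x ^ (k * α + β) = 0)
    (hA0 : ∀ N : ℕ, A 0 N = 1)
    (hA : ∀ k : ℕ, 1 ≤ k → ∀ N : ℕ,
      (∑ ℓ ∈ Finset.Icc 1 (k + 1),
          ((k + 1).choose ℓ : ℤ) * x ^ ((k + 1 - ℓ) * α) * A (ℓ - 1) N) -
        ε * A (k - 1) N - ((N : ℤ) + ν) ^ k * x ^ (k * α) = 0) :
    ∀ k : ℕ, 1 ≤ k →
      V (k - 1) = -ε * (ν.factorial : ℤ) * x ^ β * A (k - 1) 0 :=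
  stmt_10_general ε ν β α x V A hV0 hV hA0 hA
end

section
/- Let ε ∈ {1, −1}, let ν, β be nonnegative integers, let α be a positive integer, and let x ∈ ℤ. Suppose U : ℕ → ℤ satisfies the U-recurrence and V : ℕ → ℤ satisfies the V-recurrence. Then for every k ≥ 1 and every prime p, the function n ↦ ε^n·(n+ν)!·[(n+ν)^k·x^{kα} + U(k)]·x^{αn+β}, with values viewed in ℚ_p, has sum V(k−1) in ℚ_p; in particular the sum is the same integer for every prime p. -/
/-!
Write the summand as `T k n = w n * (y n ^ k + U k)` with `w n = ε ^ n (n + ν)! x ^ (α n + β)` and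
`y n = (n + ν) x ^ α`. Every term is divisible by `(n + ν)!`, which tends to `0` p-adically, so all
these series converge in `ℚ_[p]`. Since `w (n + 1) = ε y (n + 1) w n`, the binomial theorem and the
U-recurrence turn `∑ ℓ, C(k+1, ℓ) x ^ ((k+1-ℓ) α) T ℓ n` into `ε T k (n + 1)` plus a telescoping
multiple of `w`. Summing over `n`, the sums of the series satisfy the V-recurrence, whose top
coefficient is `1`; so they agree with `V`, as the initial values agree.
-/

open Filter Topology Finset
open scoped Nat

theorem Nat.pow_div_dvd_factorial (p : ℕ) [Fact p.Prime] (n : ℕ) : p ^ (n / p) ∣ n ! := by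
  have h : padicValNat p n ! = padicValNat p (n / p)! + n / p := by
    rw [← padicValNat_mul_div_factorial, padicValNat_factorial_mul]
  exact (pow_dvd_pow p (h ▸ Nat.le_add_left _ _)).trans pow_padicValNat_dvd

namespace Padic

variable {p : ℕ} [hp : Fact p.Prime]

theorem norm_factorial_le_inv_pow (n : ℕ) : ‖(n ! : ℚ_[p])‖ ≤ (p : ℝ)⁻¹ ^ (n / p) := by
  have h := (norm_int_le_pow_iff_dvd (p := p) (n ! : ℤ) (n / p)).mpr
    (mod_cast Nat.pow_div_dvd_factorial p n)
  rwa [zpow_neg, zpow_natCast, ← inv_pow, Int.cast_natCast] at h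

theorem tendsto_factorial_atTop_zero : Tendsto (fun n : ℕ => (n ! : ℚ_[p])) atTop (𝓝 0) := by
  refine squeeze_zero_norm (norm_factorial_le_inv_pow (p := p)) ?_
  exact (tendsto_pow_atTop_nhds_zero_of_lt_one (by positivity)
    (inv_lt_one_of_one_lt₀ (mod_cast hp.out.one_lt))).comp
    (Nat.tendsto_div_const_atTop hp.out.ne_zero)

theorem summable_of_factorial_dvd (ν : ℕ) {f : ℕ → ℤ} (hf : ∀ n, ((n + ν)! : ℤ) ∣ f n) :
    Summable fun n => (f n : ℚ_[p]) := by
  refine NonarchimedeanAddGroup.summable_of_tendsto_cofinite_zero ?_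
  rw [Nat.cofinite_eq_atTop]
  refine squeeze_zero_norm (fun n => ?_)
    ((tendsto_zero_iff_norm_tendsto_zero.mp (tendsto_factorial_atTop_zero (p := p))).comp
      (tendsto_add_atTop_nat ν))
  obtain ⟨c, hc⟩ := hf n
  rw [hc, Int.cast_mul, norm_mul, Function.comp_apply]
  push_cast
  exact mul_le_of_le_one_right (norm_nonneg _) (norm_int_le_one c)

end Padic

theorem eq_of_recurrence {R : Type*} [CommRing R] (c : ℕ → ℕ → R) (hc : ∀ k, c k (k + 1) = 1)
    (ε : R) (e : ℕ → R) {V W : ℕ → R} (h0 : V 0 = W 0)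
    (hV : ∀ k, 1 ≤ k → ∑ ℓ ∈ Icc 1 (k + 1), c k ℓ * V (ℓ - 1) - ε * V (k - 1) + e k = 0)
    (hW : ∀ k, 1 ≤ k → ∑ ℓ ∈ Icc 1 (k + 1), c k ℓ * W (ℓ - 1) - ε * W (k - 1) + e k = 0) :
    V = W := by
  funext k
  induction k using Nat.strong_induction_on with
  | _ k ih =>
    rcases k with _ | m
    · exact h0
    have hVm := hV (m + 1) (by omega)
    have hWm := hW (m + 1) (by omega)
    rw [sum_Icc_succ_top (by omega), hc] at hVm hWm
    have hlow : ∑ ℓ ∈ Icc 1 (m + 1), c (m + 1) ℓ * V (ℓ - 1) =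
        ∑ ℓ ∈ Icc 1 (m + 1), c (m + 1) ℓ * W (ℓ - 1) :=
      sum_congr rfl fun ℓ hℓ => by rw [ih (ℓ - 1) (by grind)]
    simp only [Nat.add_sub_cancel, ih m (by omega)] at hVm hWm
    linear_combination hVm - hWm - hlow

theorem sum_Icc_choose_mul_pow_mul_pow {R : Type*} [CommRing R] (a b : R) (m : ℕ) :
    ∑ ℓ ∈ Icc 1 m, (m.choose ℓ : R) * a ^ (m - ℓ) * b ^ ℓ = (b + a) ^ m - a ^ m := by
  rw [add_pow, range_eq_Ico, sum_eq_sum_Ico_succ_bot (Nat.succ_pos m), zero_add,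
    Nat.succ_eq_add_one, Ico_add_one_right_eq_Icc]
  simp only [pow_zero, Nat.sub_zero, Nat.choose_zero_right, Nat.cast_one, mul_one, one_mul,
    add_sub_cancel_left]
  exact sum_congr rfl fun ℓ _ => by ring

namespace FactorialSeries

variable (ε x : ℤ) (ν β α : ℕ) (U : ℕ → ℤ)

def weight (n : ℕ) : ℤ := ε ^ n * ((n + ν)! : ℤ) * x ^ (α * n + β)

def summand (k n : ℕ) : ℤ :=
  ε ^ n * ((n + ν)! : ℤ) * (((n : ℤ) + ν) ^ k * x ^ (k * α) + U k) * x ^ (α * n + β)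

variable {ε x ν β α U}

theorem summand_eq_weight_mul (k n : ℕ) :
    summand ε x ν β α U k n = weight ε x ν β α n * ((((n : ℤ) + ν) * x ^ α) ^ k + U k) := by
  rw [summand, weight, mul_pow, ← pow_mul, mul_comm α k]
  ring

theorem weight_succ (n : ℕ) :
    weight ε x ν β α (n + 1) = ε * ((n + ν + 1) * x ^ α) * weight ε x ν β α n := by
  rw [weight, weight, Nat.add_right_comm, Nat.factorial_succ]
  push_cast
  ring

theorem summand_one (hε2 : ε * ε = 1) (hU1 : U 1 = x ^ α - ε) (n : ℕ) :
    summand ε x ν β α U 1 n = ε * (weight ε x ν β α (n + 1) - weight ε x ν β α n) := by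
  rw [summand_eq_weight_mul, weight_succ, hU1]
  linear_combination (-((n : ℤ) + ν + 1) * x ^ α * weight ε x ν β α n) * hε2

theorem sum_choose_mul_summand (hε2 : ε * ε = 1) {k : ℕ}
    (hUk : ∑ ℓ ∈ Icc 1 (k + 1), ((k + 1).choose ℓ : ℤ) * x ^ ((k + 1 - ℓ) * α) * U ℓ =
      ε * U k + x ^ ((k + 1) * α)) (n : ℕ) :
    ∑ ℓ ∈ Icc 1 (k + 1), ((k + 1).choose ℓ : ℤ) * x ^ ((k + 1 - ℓ) * α) * summand ε x ν β α U ℓ n =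
      ε * summand ε x ν β α U k (n + 1) -
        ε * U k * (weight ε x ν β α (n + 1) - weight ε x ν β α n) := by
  set w := weight ε x ν β α n
  set y := ((n : ℤ) + ν) * x ^ α
  have hsplit : ∀ ℓ, ((k + 1).choose ℓ : ℤ) * x ^ ((k + 1 - ℓ) * α) * summand ε x ν β α U ℓ n =
      w * (((k + 1).choose ℓ : ℤ) * (x ^ α) ^ (k + 1 - ℓ) * y ^ ℓ) +
        w * (((k + 1).choose ℓ : ℤ) * x ^ ((k + 1 - ℓ) * α) * U ℓ) := fun ℓ => by
    rw [summand_eq_weight_mul, ← pow_mul, mul_comm α]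
    ring
  simp only [hsplit, sum_add_distrib, ← mul_sum, sum_Icc_choose_mul_pow_mul_pow, hUk]
  rw [summand_eq_weight_mul, weight_succ, ← pow_mul, mul_comm α]
  push_cast
  linear_combination (-w * ((n + ν + 1) * x ^ α) ^ (k + 1)) * hε2

section Summability

variable (ε x ν β α U) (p : ℕ) [Fact p.Prime]

theorem summable_weight : Summable fun n => (weight ε x ν β α n : ℚ_[p]) :=
  Padic.summable_of_factorial_dvd ν fun n => ⟨ε ^ n * x ^ (α * n + β), by rw [weight]; ring⟩

theorem summable_summand (k : ℕ) : Summable fun n => (summand ε x ν β α U k n : ℚ_[p]) :=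
  Padic.summable_of_factorial_dvd ν fun n =>
    ⟨ε ^ n * (((n : ℤ) + ν) ^ k * x ^ (k * α) + U k) * x ^ (α * n + β), by rw [summand]; ring⟩

theorem hasSum_weight_succ_sub :
    HasSum (fun n => (weight ε x ν β α (n + 1) : ℚ_[p]) - weight ε x ν β α n)
      (-(weight ε x ν β α 0 : ℚ_[p])) := by
  have h := (summable_weight ε x ν β α p).hasSum
  have h' := ((hasSum_nat_add_iff' 1).mpr h).sub h
  rwa [sum_range_one, sub_sub_cancel_left] at h'

-- Indexed so that `seriesSum (k - 1)` is the sum of the series `summand k`, like `V (k - 1)`.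
noncomputable def seriesSum (j : ℕ) : ℚ_[p] := ∑' n, (summand ε x ν β α U (j + 1) n : ℚ_[p])

theorem hasSum_summand_seriesSum (k : ℕ) (hk : 1 ≤ k) :
    HasSum (fun n => (summand ε x ν β α U k n : ℚ_[p])) (seriesSum ε x ν β α U p (k - 1)) := by
  rw [seriesSum, Nat.sub_add_cancel hk]
  exact (summable_summand ε x ν β α U p k).hasSum

end Summability

variable {p : ℕ} [Fact p.Prime]

theorem hasSum_summand_one (hε2 : ε * ε = 1) (hU1 : U 1 = x ^ α - ε) :
    HasSum (fun n => (summand ε x ν β α U 1 n : ℚ_[p])) (-ε * ν ! * x ^ β) := by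
  rw [show (-ε * ν ! * x ^ β : ℚ_[p]) = ε * -(weight ε x ν β α 0 : ℚ_[p]) by
    simp [weight, mul_assoc]]
  refine ((hasSum_weight_succ_sub ε x ν β α p).mul_left (ε : ℚ_[p])).congr_fun fun n => ?_
  rw [summand_one hε2 hU1]
  push_cast
  rfl

theorem tsum_summand_recurrence (hε2 : ε * ε = 1) {k : ℕ}
    (hUk : ∑ ℓ ∈ Icc 1 (k + 1), ((k + 1).choose ℓ : ℤ) * x ^ ((k + 1 - ℓ) * α) * U ℓ =
      ε * U k + x ^ ((k + 1) * α)) :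
    ∑ ℓ ∈ Icc 1 (k + 1), ((k + 1).choose ℓ : ℚ_[p]) * (x : ℚ_[p]) ^ ((k + 1 - ℓ) * α) *
        ∑' n, (summand ε x ν β α U ℓ n : ℚ_[p]) -
      ε * ∑' n, (summand ε x ν β α U k n : ℚ_[p]) + ε * ν ! * ν ^ k * x ^ (k * α + β) = 0 := by
  have hT ℓ := (summable_summand ε x ν β α U p ℓ).hasSum
  have hlhs := hasSum_sum fun ℓ (_ : ℓ ∈ Icc 1 (k + 1)) =>
    (hT ℓ).mul_left (((k + 1).choose ℓ : ℚ_[p]) * (x : ℚ_[p]) ^ ((k + 1 - ℓ) * α))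
  have hrhs := (((hasSum_nat_add_iff' 1).mpr (hT k)).mul_left (ε : ℚ_[p])).sub
    ((hasSum_weight_succ_sub ε x ν β α p).mul_left ((ε : ℚ_[p]) * U k))
  have heq := hlhs.unique (hrhs.congr_fun fun n => by
    exact_mod_cast sum_choose_mul_summand hε2 hUk n)
  rw [heq, sum_range_one, summand_eq_weight_mul k 0]
  simp only [weight, pow_zero, zero_add, mul_zero, one_mul]
  push_cast
  ring

theorem seriesSum_recurrence (hε2 : ε * ε = 1)
    (hU : ∀ k, 1 ≤ k → ∑ ℓ ∈ Icc 1 (k + 1), ((k + 1).choose ℓ : ℤ) * x ^ ((k + 1 - ℓ) * α) * U ℓ -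
      ε * U k - x ^ ((k + 1) * α) = 0)
    (k : ℕ) (hk : 1 ≤ k) :
    ∑ ℓ ∈ Icc 1 (k + 1), ((k + 1).choose ℓ : ℚ_[p]) * (x : ℚ_[p]) ^ ((k + 1 - ℓ) * α) *
        seriesSum ε x ν β α U p (ℓ - 1) -
      ε * seriesSum ε x ν β α U p (k - 1) + ε * ν ! * ν ^ k * x ^ (k * α + β) = 0 := by
  have hsum : ∑ ℓ ∈ Icc 1 (k + 1), ((k + 1).choose ℓ : ℚ_[p]) * (x : ℚ_[p]) ^ ((k + 1 - ℓ) * α) *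
      seriesSum ε x ν β α U p (ℓ - 1) = ∑ ℓ ∈ Icc 1 (k + 1), ((k + 1).choose ℓ : ℚ_[p]) *
        (x : ℚ_[p]) ^ ((k + 1 - ℓ) * α) * ∑' n, (summand ε x ν β α U ℓ n : ℚ_[p]) :=
    sum_congr rfl fun ℓ hℓ => by rw [seriesSum, Nat.sub_add_cancel (mem_Icc.mp hℓ).1]
  rw [hsum, seriesSum, Nat.sub_add_cancel hk]
  exact tsum_summand_recurrence hε2 (by linear_combination hU k hk)

end FactorialSeries

theorem stmt_11_general (ε : ℤ) (hε : ε = 1 ∨ ε = -1) (ν β : ℕ) (α : ℕ)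
    (x : ℤ) (U : ℕ → ℤ) (V : ℕ → ℤ)
    (hU1 : U 1 = x ^ α - ε)
    (hU : ∀ k : ℕ, 1 ≤ k →
      (∑ ℓ ∈ Finset.Icc 1 (k + 1),
          ((k + 1).choose ℓ : ℤ) * x ^ ((k + 1 - ℓ) * α) * U ℓ) -
        ε * U k - x ^ ((k + 1) * α) = 0)
    (hV0 : V 0 = -ε * (ν.factorial : ℤ) * x ^ β)
    (hV : ∀ k : ℕ, 1 ≤ k →
      (∑ ℓ ∈ Finset.Icc 1 (k + 1),
          ((k + 1).choose ℓ : ℤ) * x ^ ((k + 1 - ℓ) * α) * V (ℓ - 1)) -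
        ε * V (k - 1) + ε * (ν.factorial : ℤ) * (ν : ℤ) ^ k * x ^ (k * α + β) = 0) :
    ∀ k : ℕ, 1 ≤ k → ∀ (p : ℕ) [Fact (Nat.Prime p)],
      HasSum
        (fun n : ℕ =>
          ((ε ^ n * ((n + ν).factorial : ℤ) *
              (((n : ℤ) + ν) ^ k * x ^ (k * α) + U k) * x ^ (α * n + β) : ℤ) : ℚ_[p]))
        ((V (k - 1) : ℤ) : ℚ_[p]) := by
  intro k hk p _
  have hε2 : ε * ε = 1 := by rcases hε with rfl | rfl <;> norm_num
  have hS : FactorialSeries.seriesSum ε x ν β α U p = fun j => (V j : ℚ_[p]) :=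
    eq_of_recurrence _ (by simp) (ε : ℚ_[p]) _
      (by simp [FactorialSeries.seriesSum,
        (FactorialSeries.hasSum_summand_one hε2 hU1).tsum_eq, hV0])
      (FactorialSeries.seriesSum_recurrence hε2 hU) (fun j hj => by exact_mod_cast hV j hj)
  have h := FactorialSeries.hasSum_summand_seriesSum ε x ν β α U p k hk
  rw [hS] at h
  exact h

theorem stmt_11 (ε : ℤ) (hε : ε = 1 ∨ ε = -1) (ν β : ℕ) (α : ℕ) (hα : 0 < α)
    (x : ℤ) (U : ℕ → ℤ) (V : ℕ → ℤ)
    (hU1 : U 1 = x ^ α - ε)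
    (hU : ∀ k : ℕ, 1 ≤ k →
      (∑ ℓ ∈ Finset.Icc 1 (k + 1),
          ((k + 1).choose ℓ : ℤ) * x ^ ((k + 1 - ℓ) * α) * U ℓ) -
        ε * U k - x ^ ((k + 1) * α) = 0)
    (hV0 : V 0 = -ε * (ν.factorial : ℤ) * x ^ β)
    (hV : ∀ k : ℕ, 1 ≤ k →
      (∑ ℓ ∈ Finset.Icc 1 (k + 1),
          ((k + 1).choose ℓ : ℤ) * x ^ ((k + 1 - ℓ) * α) * V (ℓ - 1)) -
        ε * V (k - 1) + ε * (ν.factorial : ℤ) * (ν : ℤ) ^ k * x ^ (k * α + β) = 0) :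
    ∀ k : ℕ, 1 ≤ k → ∀ (p : ℕ) [Fact (Nat.Prime p)],
      HasSum
        (fun n : ℕ =>
          ((ε ^ n * ((n + ν).factorial : ℤ) *
              (((n : ℤ) + ν) ^ k * x ^ (k * α) + U k) * x ^ (α * n + β) : ℤ) : ℚ_[p]))
        ((V (k - 1) : ℤ) : ℚ_[p]) :=
  stmt_11_general ε hε ν β α x U V hU1 hU hV0 hV
end
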